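/- arXiv:0709.3953 — 2 statements merged into one kernel-verified Lean document; each statement's English description precedes it below -/
import Mathlib

section
/- Let M = {2,...,m+1}, let k_1,...,k_{m+1} be nonnegative integers and K = k_1 + ∑_{i∈M} k_i. Then (K−k_1)^{[m]} + ∑_{∅≠I⊆M} (k_1+1)·(K(I)+k_1)^{[|I|−1]}·(K−K(I)−k_1)^{[m−|I|]} = (K+1)^{[m]}, where K(I)=∑_{i∈I} k_i and x^{[p]} denotes the falling factorial power. -/
/-!
With `x = k₁ + 1` and `s = K - k₁` this is the case `M = {2,…,m+1}` of a falling-factorial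
Hurwitz–Abel identity, valid for all integers `x`, `s` and weights `k`:
`s^{[|M|]} + ∑_{∅ ≠ I ⊆ M} x (x + K(I) - 1)^{[|I|-1]} (s - K(I))^{[|M|-|I|]} = (x + s)^{[|M|]}`.
Since `(y + 1)^{[p]} - y^{[p]} = p y^{[p-1]}`, the step `s ↦ s + 1` changes the sum over `I` by
`∑_{t ∈ M}` of the same sums for `M \ {t}`, so by induction on `M` both sides change by the same
amount and it suffices to check `s = -x`. There the right side vanishes, while the left side is
`± x` times the `|M|`-fold finite difference, with steps `k_t - 1`, of the polynomial
`v ↦ (v + x + |M| - 1)^{[|M|-1]}` of degree `|M| - 1`, hence zero.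
-/

open Finset

/-- Falling factorial power `x^{[p]} = x(x-1)⋯(x-p+1)` for an integer `x`. -/
def fall (x : ℤ) (p : ℕ) : ℤ := ∏ i ∈ Finset.range p, (x - i)

open Polynomial

theorem fall_eq_eval_descPochhammer (x : ℤ) (p : ℕ) : fall x p = (descPochhammer ℤ p).eval x :=
  (descPochhammer_eval_eq_prod_range p x).symm

theorem fall_succ (x : ℤ) (p : ℕ) : fall x (p + 1) = fall x p * (x - p) :=
  prod_range_succ _ p

theorem fall_add (x : ℤ) (p q : ℕ) : fall x (p + q) = fall x p * fall (x - p) q := by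
  simp only [fall, prod_range_add, Nat.cast_add, sub_add_eq_sub_sub]

theorem fall_succ' (x : ℤ) (p : ℕ) : fall x (p + 1) = x * fall (x - 1) p := by
  rw [add_comm, fall_add]
  simp [fall]

theorem fall_zero_succ (p : ℕ) : fall 0 (p + 1) = 0 := by
  simp [fall_succ']

theorem fall_add_one_sub (x : ℤ) (p : ℕ) : fall (x + 1) p - fall x p = p * fall x (p - 1) := by
  cases p with
  | zero => simp [fall]
  | succ p =>
    rw [fall_succ', fall_succ, add_sub_cancel_right, add_tsub_cancel_right]
    push_cast
    ring

theorem fall_neg (x : ℤ) (p : ℕ) : fall (-x) p = (-1) ^ p * fall (x + p - 1) p := by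
  induction p with
  | zero => simp [fall]
  | succ p ih =>
    rw [fall_succ, ih, fall_succ', show x + ↑(p + 1) - 1 - 1 = x + p - 1 by push_cast; ring]
    push_cast
    ring

theorem fall_sub_one_mul_fall_neg (w : ℤ) (a b : ℕ) :
    fall (w - 1) a * fall (-w) b = (-1) ^ b * fall (w + b - 1) (b + a) := by
  rw [fall_neg, fall_add, show w + b - 1 - b = w - 1 by ring]
  ring

theorem Finset.sum_powerset_eq_add_sum_filter_nonempty {ι β : Type*} [DecidableEq ι]
    [AddCommMonoid β] (M : Finset ι) (f : Finset ι → β) :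
    ∑ I ∈ M.powerset, f I = f ∅ + ∑ I ∈ M.powerset.filter (·.Nonempty), f I := by
  rw [← add_sum_erase _ _ (empty_mem_powerset M)]
  congr 2
  ext I
  simp [nonempty_iff_ne_empty, and_comm]

theorem Polynomial.sum_powerset_neg_one_pow_mul_eval_eq_zero {R ι : Type*} [CommRing R]
    [DecidableEq ι] (h : ι → R) (M : Finset ι) (P : R[X]) (hP : P.degree < #M) :
    ∑ I ∈ M.powerset, (-1) ^ (#M - #I) * P.eval (∑ i ∈ I, h i) = 0 := by
  induction M using Finset.induction_on generalizing P with
  | empty => simp_all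
  | insert a M ha ih =>
    have hQ : (taylor (h a) P - P).degree < #M := by
      rcases eq_or_ne P 0 with rfl | hP0
      · simp
      · rw [card_insert_of_notMem ha, Nat.cast_add, Nat.cast_one] at hP
        exact (degree_sub_lt_left (degree_taylor P (h a)) (by simpa)
          (leadingCoeff_taylor _ _)).trans_le (degree_taylor P (h a) ▸ Order.le_of_lt_succ hP)
    -- Pairing `I` with `insert a I` gives the same sum over `M` for `P(· + h a) - P`.
    rw [sum_powerset_insert ha, ← ih _ hQ, ← sum_add_distrib]
    refine sum_congr rfl fun I hI => ?_
    have haI : a ∉ I := fun h => ha (mem_powerset.1 hI h)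
    have hIM : #I ≤ #M := card_le_card (mem_powerset.1 hI)
    rw [card_insert_of_notMem ha, card_insert_of_notMem haI, sum_insert haI, eval_sub, taylor_eval,
      Nat.succ_sub hIM, Nat.add_sub_add_right, add_comm (h a), pow_succ]
    ring

section Abel

variable {ι : Type*} [DecidableEq ι] (k : ι → ℤ) (x : ℤ)

def abelSum (s : ℤ) (M : Finset ι) : ℤ :=
  ∑ I ∈ M.powerset.filter (·.Nonempty),
    x * fall (x + ∑ i ∈ I, k i - 1) (#I - 1) * fall (s - ∑ i ∈ I, k i) (#M - #I)

theorem abelSum_add_one_sub (s : ℤ) (M : Finset ι) :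
    abelSum k x (s + 1) M - abelSum k x s M = ∑ t ∈ M, abelSum k x s (M.erase t) := calc
  _ = ∑ I ∈ M.powerset.filter (·.Nonempty), ∑ t ∈ M \ I,
        x * fall (x + ∑ i ∈ I, k i - 1) (#I - 1) * fall (s - ∑ i ∈ I, k i) (#(M.erase t) - #I) := by
    rw [abelSum, abelSum, ← sum_sub_distrib]
    refine sum_congr rfl fun I hI => ?_
    have hIM : I ⊆ M := mem_powerset.1 (mem_filter.1 hI).1
    trans ∑ _t ∈ M \ I,
      x * fall (x + ∑ i ∈ I, k i - 1) (#I - 1) * fall (s - ∑ i ∈ I, k i) (#M - #I - 1)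
    · rw [sum_const, card_sdiff_of_subset hIM, nsmul_eq_mul, ← mul_sub,
        show s + 1 - ∑ i ∈ I, k i = s - ∑ i ∈ I, k i + 1 by ring, fall_add_one_sub]
      ring
    · refine sum_congr rfl fun t ht => ?_
      rw [card_erase_of_mem (mem_sdiff.1 ht).1, Nat.sub_right_comm]
  _ = _ := by
    refine sum_comm' fun I t => ?_
    simp only [mem_filter, mem_powerset, mem_sdiff, subset_erase]
    tauto

theorem fall_neg_add_abelSum_neg (M : Finset ι) (hM : M.Nonempty) :
    fall (-x) #M + abelSum k x (-x) M = 0 := by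
  obtain ⟨n, hn⟩ : ∃ n, #M = n + 1 := Nat.exists_eq_add_one.2 hM.card_pos
  set P : ℤ[X] := taylor (x + n) (descPochhammer ℤ n)
  have hP : P.degree < #M := by
    rw [degree_taylor, hn]
    exact (degree_le_natDegree.trans_eq (by rw [descPochhammer_natDegree])).trans_lt
      (by exact_mod_cast n.lt_succ_self)
  have hPeval (v : ℤ) : P.eval v = fall (v + (x + n)) n := by
    rw [taylor_eval, fall_eq_eval_descPochhammer]
  set T : Finset ι → ℤ := fun I => x * ((-1) ^ (#M - #I) * P.eval (∑ i ∈ I, (k i - 1)))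
  have hterm : ∀ I ∈ M.powerset.filter (·.Nonempty),
      x * fall (x + ∑ i ∈ I, k i - 1) (#I - 1) * fall (-x - ∑ i ∈ I, k i) (#M - #I) = T I := by
    intro I hI
    obtain ⟨hIM, hI⟩ := mem_filter.1 hI
    have hcard : #I ≤ #M := card_le_card (mem_powerset.1 hIM)
    simp only [T]
    rw [show -x - ∑ i ∈ I, k i = -(x + ∑ i ∈ I, k i) by ring, mul_assoc, fall_sub_one_mul_fall_neg,
      show #M - #I + (#I - 1) = n by have := hI.card_pos; omega, hPeval, sum_sub_distrib,
      Nat.cast_sub hcard, hn, sum_const, nsmul_one]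
    push_cast
    ring_nf
  have hempty : fall (-x) #M = T ∅ := by
    simp only [T]
    rw [card_empty, Nat.sub_zero, sum_empty, fall_neg, hn, hPeval, zero_add,
      show x + ↑(n + 1) - 1 = x + n by push_cast; ring, fall_succ, add_sub_cancel_right]
    ring
  rw [abelSum, sum_congr rfl hterm, hempty, ← sum_powerset_eq_add_sum_filter_nonempty M T,
    ← mul_sum, sum_powerset_neg_one_pow_mul_eval_eq_zero _ _ _ hP, mul_zero]

theorem fall_add_abelSum (s : ℤ) (M : Finset ι) :
    fall s #M + abelSum k x s M = fall (x + s) #M := by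
  induction M using Finset.strongInduction generalizing s with
  | H M ih =>
    rcases M.eq_empty_or_nonempty with rfl | hM
    · simp [abelSum, fall, filter_singleton]
    obtain ⟨n, hn⟩ : ∃ n, #M = n + 1 := Nat.exists_eq_add_one.2 hM.card_pos
    set D : ℤ → ℤ := fun s => fall s #M + abelSum k x s M - fall (x + s) #M
    have hD : Function.Periodic D 1 := by
      intro s
      have herase : ∀ t ∈ M, abelSum k x s (M.erase t) = fall (x + s) n - fall s n := by
        intro t ht
        rw [eq_sub_iff_add_eq', show n = #(M.erase t) by rw [card_erase_of_mem ht, hn]; rfl]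
        exact ih _ (erase_ssubset ht) s
      rw [← sub_eq_zero]
      calc D (s + 1) - D s = (fall (s + 1) #M - fall s #M)
            + (abelSum k x (s + 1) M - abelSum k x s M)
            - (fall (x + s + 1) #M - fall (x + s) #M) := by simp only [D]; ring_nf
        _ = 0 := by
          rw [fall_add_one_sub, fall_add_one_sub, abelSum_add_one_sub, sum_congr rfl herase,
            sum_const, hn, nsmul_eq_mul, add_tsub_cancel_right]
          ring
    have hD0 : D (-x) = 0 := by
      show fall (-x) #M + abelSum k x (-x) M - fall (x + -x) #M = 0
      rw [add_neg_cancel, hn, fall_zero_succ, sub_zero, ← hn]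
      exact fall_neg_add_abelSum_neg k x M hM
    have hDs : D s = D (-x) := by simpa using hD.int_mul (s + x) (-x)
    simpa [D, sub_eq_zero] using hDs.trans hD0

end Abel

/-- Index `0` plays the role of `k₁` and the remaining `m` indices play
the role of `M = {2,…,m+1}`. -/
theorem lemma_A2 (m : ℕ) (k : Fin (m + 1) → ℕ) :
    fall ((∑ i, (k i : ℤ)) - k 0) m
      + ∑ I ∈ ((Finset.univ : Finset (Fin (m + 1))).erase 0).powerset.filter
          (fun I => I.Nonempty),
          ((k 0 : ℤ) + 1) * fall ((∑ i ∈ I, (k i : ℤ)) + k 0) (I.card - 1)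
            * fall ((∑ i, (k i : ℤ)) - (∑ i ∈ I, (k i : ℤ)) - k 0) (m - I.card)
      = fall ((∑ i, (k i : ℤ)) + 1) m := by
  have h := fall_add_abelSum (fun i => (k i : ℤ)) (k 0 + 1) (∑ i, (k i : ℤ) - k 0) (univ.erase 0)
  rw [abelSum, card_erase_of_mem (mem_univ 0), card_univ, Fintype.card_fin,
    add_tsub_cancel_right] at h
  convert h using 2
  · refine sum_congr rfl fun I _ => ?_
    rw [sub_right_comm]
    congr 3
    ring
  · ring
end

section
/- Let n ≥ 4, k ∈ [n], and S = {s₁, k} a 2-element subset of [n]. Define a ∈ ℝ^n by a_{s₁} = n−4, a_k = 0, a_i = 1 otherwise. Then 2·e_S = ∑_{I ⊆ [n]∖{k}, |I|=2, s₁ ∈ I} v_I − Φ_n(a) in ℝ^T, where e_S is the S-th standard basis vector of ℝ^T. -/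
/-!
Every pair `I ∋ s₁` avoiding `k` is `{s₁, x}` with `x ∈ E := [n] ∖ {s₁, k}`, and on `[n] ∖ {s₁}`
the vector `a` is the indicator of `E`. Evaluate both sides at a pair `U`. If `s₁ ∉ U`, then
`v_{s₁,x}(U) = [x ∈ U]`, so the sum and `Φ_n(a)_U` both count `|U ∩ E|`. If `U = {s₁, u}`, then
`v_{s₁,x}(U) = [x ≠ u]`, so the sum is `n - 2 - [u ∈ E]` while `Φ_n(a)_U = n - 4 + [u ∈ E]`; the
difference `2 - 2 [u ∈ E]` is `2` exactly when `u = k`, i.e. when `U = S`.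
-/

open Finset

noncomputable def Phi (n : ℕ) :
    (Fin n → ℝ) →ₗ[ℝ] ({S : Finset (Fin n) // S.card = 2} → ℝ) :=
  LinearMap.pi fun S => ∑ i ∈ S.1, LinearMap.proj i

def v (n : ℕ) (I : Finset (Fin n)) : {S : Finset (Fin n) // S.card = 2} → ℝ :=
  fun S => if (I ∩ S.1).card = 1 then 1 else 0

namespace Finset

variable {α : Type*} [DecidableEq α]

theorem exists_eq_pair_of_card_eq_two_of_mem {s : α} {I : Finset α} (hI : #I = 2) (hs : s ∈ I) :
    ∃ x ≠ s, I = {s, x} := by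
  obtain ⟨a, b, hab, rfl⟩ := card_eq_two.mp hI
  rcases mem_insert.mp hs with rfl | h
  · exact ⟨b, hab.symm, rfl⟩
  · obtain rfl := mem_singleton.mp h
    exact ⟨a, hab, pair_comm _ _⟩

theorem filter_mem_powersetCard_two {s : α} {t : Finset α} (hs : s ∈ t) :
    {I ∈ powersetCard 2 t | s ∈ I} = (t.erase s).image fun x => {s, x} := by
  ext I
  simp only [mem_filter, mem_powersetCard, mem_image, mem_erase]
  constructor
  · rintro ⟨⟨hIt, hI⟩, hsI⟩
    obtain ⟨x, hxs, rfl⟩ := exists_eq_pair_of_card_eq_two_of_mem hI hsI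
    exact ⟨x, ⟨hxs, hIt (by simp)⟩, rfl⟩
  · rintro ⟨x, ⟨hxs, hxt⟩, rfl⟩
    exact ⟨⟨insert_subset hs (singleton_subset_iff.mpr hxt), card_pair hxs.symm⟩, by simp⟩

theorem sum_filter_mem_powersetCard_two {M : Type*} [AddCommMonoid M] {s : α} {t : Finset α}
    (hs : s ∈ t) (f : Finset α → M) :
    ∑ I ∈ powersetCard 2 t with s ∈ I, f I = ∑ x ∈ t.erase s, f {s, x} := by
  rw [filter_mem_powersetCard_two hs, sum_image]
  intro x hx y _ hxy
  have hx' : x ∈ ({s, y} : Finset α) := by simp [← show ({s, x} : Finset α) = {s, y} from hxy]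
  simpa [(mem_erase.mp hx).1] using hx'

theorem card_erase_erase_add_two {s : Finset α} {a b : α} (ha : a ∈ s) (hb : b ∈ s)
    (hba : b ≠ a) : #((s.erase a).erase b) + 2 = #s := by
  rw [card_erase_of_mem (mem_erase.mpr ⟨hba, hb⟩), card_erase_of_mem ha]
  have : 2 ≤ #s := by
    simpa [card_pair hba] using card_le_card (insert_subset hb (singleton_subset_iff.mpr ha))
  omega

end Finset

section

variable {n : ℕ}

theorem Phi_apply (a : Fin n → ℝ) (U : {S : Finset (Fin n) // S.card = 2}) :
    Phi n a U = ∑ i ∈ U.1, a i := by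
  simp [Phi]

variable {s x : Fin n} {U : {S : Finset (Fin n) // S.card = 2}}

theorem v_pair_apply_of_notMem (hs : s ∉ U.1) : v n {s, x} U = if x ∈ U.1 then 1 else 0 := by
  by_cases hxU : x ∈ U.1 <;> simp [v, insert_inter_of_notMem hs, hxU]

theorem v_pair_apply_of_mem (hs : s ∈ U.1) (hx : x ≠ s) :
    v n {s, x} U = if x ∈ U.1 then 0 else 1 := by
  by_cases hxU : x ∈ U.1 <;> simp [v, insert_inter_of_mem hs, hxU, card_pair hx.symm]

end

section

variable {n : ℕ} {k s₁ : Fin n} {U : {S : Finset (Fin n) // S.card = 2}}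

theorem sum_v_pair_eq_sum_of_notMem (hsU : s₁ ∉ U.1) :
    ∑ x ∈ (univ.erase k).erase s₁, v n {s₁, x} U
      = ∑ i ∈ U.1, (if i = s₁ then (n : ℝ) - 4 else if i = k then 0 else 1) := by
  have hweight : ∀ i ∈ U.1, (if i = s₁ then (n : ℝ) - 4 else if i = k then 0 else 1)
      = if i ∈ (univ.erase k).erase s₁ then 1 else 0 := by
    intro i hi
    have his : i ≠ s₁ := fun h => hsU (h ▸ hi)
    obtain rfl | hik := eq_or_ne i k
    · simp [his]
    · simp [his, hik]
  simp_rw [v_pair_apply_of_notMem hsU, sum_congr rfl hweight, sum_boole, filter_mem_eq_inter,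
    inter_comm]

theorem sum_v_pair_of_eq_pair {u : Fin n} (hne : s₁ ≠ k) (hu : u ≠ s₁) (hU : U.1 = {s₁, u}) :
    ∑ x ∈ (univ.erase k).erase s₁, v n {s₁, x} U = (n : ℝ) - 2 - if u = k then 0 else 1 := by
  have hsU : s₁ ∈ U.1 := hU ▸ mem_insert_self _ _
  have hterm : ∀ x ∈ (univ.erase k).erase s₁, v n {s₁, x} U = 1 - if x = u then 1 else 0 := by
    intro x hx
    rw [v_pair_apply_of_mem hsU (mem_erase.mp hx).1, hU]
    by_cases hxu : x = u <;> simp [hxu, (mem_erase.mp hx).1]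
  have hcard : (#((univ.erase k).erase s₁) : ℝ) = n - 2 := by
    rw [eq_sub_iff_add_eq]
    exact_mod_cast (card_erase_erase_add_two (mem_univ k) (mem_univ s₁) hne).trans
      (card_fin n)
  have huE : u ∈ (univ.erase k).erase s₁ ↔ u ≠ k := by simp [hu]
  rw [sum_congr rfl hterm, sum_sub_distrib, sum_const, sum_ite_eq', nsmul_one, hcard]
  by_cases huk : u = k <;> simp [huk, huE]

end

theorem two_eS_eq_general (n : ℕ) (k s₁ : Fin n) (hne : s₁ ≠ k)
    (S : {S : Finset (Fin n) // S.card = 2}) (hS : S.1 = {s₁, k}) :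
    (2 : ℝ) • (Pi.single S 1 : {S : Finset (Fin n) // S.card = 2} → ℝ)
      = (∑ I ∈ (Finset.powersetCard 2 ((Finset.univ : Finset (Fin n)).erase k)).filter
            (fun I => s₁ ∈ I), v n I)
        - Phi n (fun i => if i = s₁ then (n : ℝ) - 4 else if i = k then 0 else 1) := by
  funext U
  rw [Pi.smul_apply, Pi.sub_apply, Finset.sum_apply,
    sum_filter_mem_powersetCard_two (mem_erase.mpr ⟨hne, mem_univ _⟩), Phi_apply]
  by_cases hsU : s₁ ∈ U.1
  · obtain ⟨u, hus, hU⟩ := exists_eq_pair_of_card_eq_two_of_mem U.2 hsU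
    rw [sum_v_pair_of_eq_pair hne hus hU, hU, sum_pair hus.symm]
    obtain rfl | huk := eq_or_ne u k
    · rw [show U = S from Subtype.ext (hU.trans hS.symm), Pi.single_eq_same]
      norm_num [hne.symm]
    · have hUS : U ≠ S := by
        rintro rfl
        have hkU : k ∈ U.1 := by simp [hS]
        simp [hU, hne.symm, huk.symm] at hkU
      rw [Pi.single_eq_of_ne hUS, smul_zero]
      simp only [huk, hus, if_false, if_true]
      ring
  · have hUS : U ≠ S := fun h => hsU (by simp [h, hS])
    rw [Pi.single_eq_of_ne hUS, smul_zero, sum_v_pair_eq_sum_of_notMem hsU, sub_self]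

theorem two_eS_eq (n : ℕ) (hn : 4 ≤ n) (k s₁ : Fin n) (hne : s₁ ≠ k)
    (S : {S : Finset (Fin n) // S.card = 2}) (hS : S.1 = {s₁, k}) :
    (2 : ℝ) • (Pi.single S 1 : {S : Finset (Fin n) // S.card = 2} → ℝ)
      = (∑ I ∈ (Finset.powersetCard 2 ((Finset.univ : Finset (Fin n)).erase k)).filter
            (fun I => s₁ ∈ I), v n I)
        - Phi n (fun i => if i = s₁ then (n : ℝ) - 4 else if i = k then 0 else 1) :=
  two_eS_eq_general n k s₁ hne S hS
end
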